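/- Let R be an associative ring and I a two-sided ideal of R such that R/I is commutative and every element of I is nilpotent. Then the set of nilpotent elements of R is a two-sided ideal of R. -/

import Mathlib

/-!
The quotient map `π : R → R/I` reflects nilpotency: if `π x ^ n = 0` then `x ^ n ∈ I` is
nilpotent, hence so is `x`. In the commutative ring `R/I` the nilpotent elements form an ideal,
so the nilpotent elements of `R` are exactly its preimage under `π`.
-/

theorem IsNilpotent.of_map {M N F : Type*} [MonoidWithZero M] [MonoidWithZero N]
    [FunLike F M N] [MonoidWithZeroHomClass F M N] {f : F}
    (hker : ∀ y, f y = 0 → IsNilpotent y) {x : M} (hx : IsNilpotent (f x)) : IsNilpotent x := by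
  obtain ⟨n, hn⟩ := hx
  obtain ⟨m, hm⟩ := hker (x ^ n) (by rw [map_pow, hn])
  exact ⟨n * m, by rw [pow_mul, hm]⟩

namespace TwoSidedIdeal

variable {R : Type*} [Ring R]

def nilradicalOfCommute (hcomm : ∀ a b : R, Commute a b) : TwoSidedIdeal R :=
  .mk' {x | IsNilpotent x} IsNilpotent.zero
    (fun hx hy => (hcomm _ _).isNilpotent_add hx hy) IsNilpotent.neg
    (fun hy => (hcomm _ _).isNilpotent_mul_left hy)
    (fun hx => (hcomm _ _).isNilpotent_mul_right hx)

theorem mem_nilradicalOfCommute {hcomm : ∀ a b : R, Commute a b} {x : R} :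
    x ∈ nilradicalOfCommute hcomm ↔ IsNilpotent x :=
  mem_mk' _ _ _ _ _ _ x

theorem mem_of_mk'_eq_zero (I : TwoSidedIdeal R) {x : R} (hx : I.ringCon.mk' x = 0) : x ∈ I := by
  rwa [← ker_ringCon_mk' I, mem_ker]

theorem commute_quotient (I : TwoSidedIdeal R) (hcomm : ∀ a b : R, a * b - b * a ∈ I)
    (p q : I.ringCon.Quotient) : Commute p q := by
  induction p using Quotient.inductionOn' with | h a => ?_
  induction q using Quotient.inductionOn' with | h b => ?_
  exact Quotient.sound' <| (I.rel_iff _ _).2 (hcomm a b)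

end TwoSidedIdeal

open TwoSidedIdeal in
/-- If `I` is a two-sided ideal of an associative ring `R` such that `R/I` is
commutative and every element of `I` is nilpotent, then the nilpotent elements
of `R` form a two-sided ideal. -/
theorem nilpotents_form_ideal
    {R : Type*} [Ring R] (I : TwoSidedIdeal R)
    (hcomm : ∀ a b : R, a * b - b * a ∈ I)
    (hnil : ∀ y ∈ I, IsNilpotent y) :
    ∃ J : TwoSidedIdeal R, ∀ x : R, x ∈ J ↔ IsNilpotent x := by
  refine ⟨(nilradicalOfCommute (commute_quotient I hcomm)).comap I.ringCon.mk', fun x => ?_⟩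
  rw [mem_comap, mem_nilradicalOfCommute]
  exact ⟨IsNilpotent.of_map fun y hy => hnil y (I.mem_of_mk'_eq_zero hy), fun hx => hx.map _⟩
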